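/- Channels whose power is the completely depolarizing map: let D ≥ 1, k ≥ 1, and let Φ be a CP map on D×D complex matrices with Kraus operators K : Fin d → Matrix (Fin D) (Fin D) ℂ. Assume Φ is unital (∑_a (K a) * (K a)ᴴ = 1) or trace-preserving (∑_a (K a)ᴴ * (K a) = 1), and that the k-fold composition of Φ with itself is the map X ↦ (trace X / D) • 1. Then Φ is both unital and trace-preserving, and the characteristic polynomial of its matrix representation T = ∑_a (K a) ⊗ₖ ((K a).map star) equals X^(D²−1) · (X − 1); in particular the eigenvalues of Φ, with multiplicity, are 1 (once) and 0 (D²−1 times). -/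

import Mathlib

/-!
Vectorize `X` row-major as `vec Xᵀ`. Then `T` acts as `Φ`, and the completely depolarizing
map becomes the rank-one projection `P = D⁻¹ • u uᵀ` with `u = vec 1`, so `T ^ k = P`.
Unitality of `Φ` reads `T u = u`, i.e. `T P = P`, and trace preservation reads `uᵀ T = uᵀ`,
i.e. `P T = P`; these are equivalent because `T` commutes with `T ^ k = P`. Then
`N = T - P = T (1 - P)` satisfies `N ^ k = P (1 - P) = 0` and `P N = 0`, so
`(X - P)(X - N) = X (X - T)` for the characteristic matrices, and cancelling `χ_N = X ^ (D²)`
gives `χ_T = χ_P = X ^ (D² - 1) (X - 1)`.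
-/

open Matrix
open scoped Kronecker

/-- The matrix representation `T = ∑ a, K a ⊗ₖ (K a).map star`. -/
noncomputable def transferMatrix {D d : ℕ} (K : Fin d → Matrix (Fin D) (Fin D) ℂ) :
    Matrix (Fin D × Fin D) (Fin D × Fin D) ℂ :=
  ∑ a, K a ⊗ₖ (K a).map star

open Polynomial

namespace Matrix

section VecMulVec

variable {m n R : Type*}

theorem vecMulVec_left_injective [MulZeroClass R] [IsRightCancelMulZero R] {b : n → R}
    (hb : b ≠ 0) :
    Function.Injective fun a : m → R => vecMulVec a b := by
  intro x y h
  obtain ⟨j, hj⟩ := Function.ne_iff.mp hb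
  funext i
  exact mul_right_cancel₀ hj (congrFun (congrFun h i) j)

theorem vecMulVec_right_injective [MulZeroClass R] [IsLeftCancelMulZero R] {a : m → R}
    (ha : a ≠ 0) :
    Function.Injective (vecMulVec a : (n → R) → Matrix m n R) := by
  intro x y h
  obtain ⟨i, hi⟩ := Function.ne_iff.mp ha
  funext j
  exact mul_left_cancel₀ hi (congrFun (congrFun h i) j)

theorem mul_vecMulVec_eq_self_iff [Fintype n] [Semiring R] [IsDomain R] {a : n → R}
    {b : m → R} (hb : b ≠ 0) (M : Matrix n n R) :
    M * vecMulVec a b = vecMulVec a b ↔ M *ᵥ a = a := by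
  rw [mul_vecMulVec]
  exact (vecMulVec_left_injective hb).eq_iff

theorem vecMulVec_mul_eq_self_iff [Fintype n] [Semiring R] [IsDomain R] {a : m → R}
    {b : n → R} (ha : a ≠ 0) (M : Matrix n n R) :
    vecMulVec a b * M = vecMulVec a b ↔ b ᵥ* M = b := by
  rw [vecMulVec_mul]
  exact (vecMulVec_right_injective ha).eq_iff

end VecMulVec

section CommRing

variable {n R : Type*} [Fintype n] [DecidableEq n] [CommRing R]

theorem charmatrix_mul_charmatrix_of_mul_eq_zero {A B : Matrix n n R} (h : A * B = 0) :
    charmatrix A * charmatrix B = scalar n (X : R[X]) * charmatrix (A + B) := by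
  simp only [charmatrix, sub_mul, mul_sub, mul_add, ← map_mul, h, map_add, map_zero,
    ← (scalar_commute (X : R[X]) (Commute.all X) _).eq]
  abel

theorem charpoly_mul_charpoly_of_mul_eq_zero {A B : Matrix n n R} (h : A * B = 0) :
    A.charpoly * B.charpoly = X ^ Fintype.card n * (A + B).charpoly := by
  rw [charpoly, charpoly, ← det_mul, charmatrix_mul_charmatrix_of_mul_eq_zero h, det_mul,
    scalar_apply, det_diagonal, Finset.prod_const, Finset.card_univ, charpoly]

theorem charpoly_eq_X_pow_of_isNilpotent [IsDomain R] {N : Matrix n n R} (h : IsNilpotent N) :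
    N.charpoly = X ^ Fintype.card n :=
  sub_eq_zero.mp (isNilpotent_charpoly_sub_pow_of_isNilpotent h).eq_zero

theorem charpoly_add_of_mul_eq_zero_of_isNilpotent [IsDomain R] {A N : Matrix n n R}
    (h : A * N = 0) (hN : IsNilpotent N) : (A + N).charpoly = A.charpoly :=
  mul_left_cancel₀ (pow_ne_zero (Fintype.card n) X_ne_zero) <| by
    rw [← charpoly_mul_charpoly_of_mul_eq_zero h, charpoly_eq_X_pow_of_isNilpotent hN, mul_comm]

theorem charpoly_eq_of_pow_eq {T P : Matrix n n R} [IsDomain R] {k : ℕ} (hk : k ≠ 0)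
    (hTk : T ^ k = P) (hTP : T * P = P) (hPT : P * T = P) : T.charpoly = P.charpoly := by
  have hP : IsIdempotentElem P := by
    have hfix : Function.IsFixedPt (T * ·) P := hTP
    simpa only [IsIdempotentElem, mul_left_iterate, hTk, Function.IsFixedPt] using hfix.iterate k
  obtain ⟨j, rfl⟩ := Nat.exists_eq_succ_of_ne_zero hk
  have hnil : IsNilpotent (T - P) := by
    have hcomm : Commute T (1 - P) := by
      simp only [Commute, SemiconjBy, mul_sub, sub_mul, mul_one, one_mul, hTP, hPT]
    refine ⟨j + 1, ?_⟩
    rw [show T - P = T * (1 - P) by rw [mul_sub, mul_one, hTP], hcomm.mul_pow, hTk,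
      hP.one_sub.pow_succ_eq, mul_sub, mul_one, hP.eq, sub_self]
  calc T.charpoly = (P + (T - P)).charpoly := by rw [add_sub_cancel]
    _ = P.charpoly := charpoly_add_of_mul_eq_zero_of_isNilpotent
          (by rw [mul_sub, hPT, hP.eq, sub_self]) hnil

theorem charpoly_vecMulVec_of_dotProduct_eq_one [Nonempty n] {u v : n → R} (h : u ⬝ᵥ v = 1) :
    (vecMulVec u v).charpoly = X ^ (Fintype.card n - 1) * (X - 1) := by
  rw [charpoly_vecMulVec, h, one_smul, mul_sub, mul_one, ← pow_succ,
    Nat.sub_add_cancel Fintype.card_pos]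

end CommRing

end Matrix

/-- The matrix of `X ↦ (trace X / card n) • 1` acting on `vec Xᵀ`; Mathlib's `vec` stacks
columns, so `vec Xᵀ` is the row-major vectorization that `transferMatrix` acts on. -/
noncomputable def depolarizingMatrix (n : Type*) [Fintype n] [DecidableEq n] :
    Matrix (n × n) (n × n) ℂ :=
  vecMulVec ((Fintype.card n : ℂ)⁻¹ • vec (1 : Matrix n n ℂ)) (vec 1)

section Depolarizing

variable {n : Type*} [Fintype n] [DecidableEq n]

theorem depolarizingMatrix_mulVec_vec_transpose (X : Matrix n n ℂ) :
    depolarizingMatrix n *ᵥ vec Xᵀ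
      = vec ((X.trace / Fintype.card n) • (1 : Matrix n n ℂ))ᵀ := by
  rw [depolarizingMatrix, vecMulVec_mulVec, vec_dotProduct_vec, transpose_one, one_mul,
    trace_transpose, op_smul_eq_smul, smul_smul, transpose_smul, transpose_one, vec_smul,
    div_eq_mul_inv]

theorem vec_one_ne_zero [Nonempty n] : vec (1 : Matrix n n ℂ) ≠ 0 := by
  rw [Ne, vec_eq_zero_iff]
  exact one_ne_zero

theorem charpoly_depolarizingMatrix [Nonempty n] :
    (depolarizingMatrix n).charpoly = X ^ (Fintype.card n ^ 2 - 1) * (X - 1) := by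
  have hdot : (Fintype.card n : ℂ)⁻¹ • vec (1 : Matrix n n ℂ) ⬝ᵥ vec 1 = 1 := by
    rw [smul_dotProduct, vec_dotProduct_vec, transpose_one, one_mul, trace_one, smul_eq_mul,
      inv_mul_cancel₀ (Nat.cast_ne_zero.mpr Fintype.card_ne_zero)]
  rw [depolarizingMatrix, charpoly_vecMulVec_of_dotProduct_eq_one hdot, Fintype.card_prod, sq]

theorem mul_depolarizingMatrix_eq_self_iff [Nonempty n] (M : Matrix (n × n) (n × n) ℂ) :
    M * depolarizingMatrix n = depolarizingMatrix n ↔ M *ᵥ vec 1 = vec 1 := by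
  rw [depolarizingMatrix, mul_vecMulVec_eq_self_iff vec_one_ne_zero, mulVec_smul,
    smul_right_inj (inv_ne_zero (Nat.cast_ne_zero.mpr Fintype.card_ne_zero))]

theorem depolarizingMatrix_mul_eq_self_iff [Nonempty n] (M : Matrix (n × n) (n × n) ℂ) :
    depolarizingMatrix n * M = depolarizingMatrix n ↔ vec 1 ᵥ* M = vec 1 := by
  rw [depolarizingMatrix, vecMulVec_mul_eq_self_iff]
  exact smul_ne_zero (inv_ne_zero (Nat.cast_ne_zero.mpr Fintype.card_ne_zero)) vec_one_ne_zero

end Depolarizing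

noncomputable def krausMap {ι n : Type*} [Fintype ι] [Fintype n] (K : ι → Matrix n n ℂ)
    (X : Matrix n n ℂ) : Matrix n n ℂ :=
  ∑ a, K a * X * (K a)ᴴ

section TransferMatrix

variable {D d : ℕ} (K : Fin d → Matrix (Fin D) (Fin D) ℂ)

theorem transferMatrix_mulVec_vec_transpose (X : Matrix (Fin D) (Fin D) ℂ) :
    transferMatrix K *ᵥ vec Xᵀ = vec (krausMap K X)ᵀ := by
  simp only [transferMatrix, krausMap, sum_mulVec, kronecker_mulVec_vec, transpose_sum, vec_sum,
    transpose_mul, conjTranspose_transpose, Matrix.mul_assoc]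

theorem transferMatrix_pow_mulVec_vec_transpose (m : ℕ) (X : Matrix (Fin D) (Fin D) ℂ) :
    transferMatrix K ^ m *ᵥ vec Xᵀ = vec ((krausMap K)^[m] X)ᵀ := by
  induction m generalizing X with
  | zero => simp
  | succ m ih =>
    rw [pow_succ, ← mulVec_mulVec, transferMatrix_mulVec_vec_transpose, ih,
      Function.iterate_succ_apply]

theorem vec_one_vecMul_transferMatrix :
    vec 1 ᵥ* transferMatrix K = vec (∑ a, (K a)ᴴ * K a) := by
  simp only [transferMatrix, vecMul_sum, vec_vecMul_kronecker, vec_sum,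
    ← conjTranspose_transpose, transpose_transpose, Matrix.mul_one]

theorem sum_mul_conjTranspose_eq_one_iff :
    ∑ a, K a * (K a)ᴴ = 1 ↔ transferMatrix K *ᵥ vec 1 = vec 1 := by
  have h := transferMatrix_mulVec_vec_transpose K 1
  rw [transpose_one] at h
  rw [h, vec_inj, transpose_eq_one, krausMap]
  simp only [Matrix.mul_one]

theorem sum_conjTranspose_mul_eq_one_iff :
    ∑ a, (K a)ᴴ * K a = 1 ↔ vec 1 ᵥ* transferMatrix K = vec 1 := by
  rw [vec_one_vecMul_transferMatrix, vec_inj]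

theorem transferMatrix_pow_eq_depolarizingMatrix {k : ℕ}
    (hdep : ∀ X, (krausMap K)^[k] X = (X.trace / D) • (1 : Matrix (Fin D) (Fin D) ℂ)) :
    transferMatrix K ^ k = depolarizingMatrix (Fin D) := by
  refine ext_iff_mulVec.mpr fun v => ?_
  obtain ⟨X, rfl⟩ := vec_bijective.surjective v
  rw [← transpose_transpose X, transferMatrix_pow_mulVec_vec_transpose,
    depolarizingMatrix_mulVec_vec_transpose, hdep, Fintype.card_fin]

end TransferMatrix

/-- Channels whose power is the completely depolarizing map: if a CP map `Φ` with Kraus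
operators `K` is unital or trace-preserving and its `k`-fold iterate is
`X ↦ (trace X / D) • 1`, then `Φ` is both unital and trace-preserving and the characteristic
polynomial of its matrix representation equals `X^(D² - 1) * (X - 1)`; in particular its
eigenvalues with multiplicity are `1` (once) and `0` (`D² - 1` times). -/
theorem charpoly_of_power_depolarizing
    (D d k : ℕ) (hD : 1 ≤ D) (hk : 1 ≤ k)
    (K : Fin d → Matrix (Fin D) (Fin D) ℂ)
    (hut : (∑ a, K a * (K a)ᴴ = (1 : Matrix (Fin D) (Fin D) ℂ)) ∨
      (∑ a, (K a)ᴴ * K a = (1 : Matrix (Fin D) (Fin D) ℂ)))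
    (hdep : ∀ X : Matrix (Fin D) (Fin D) ℂ,
      (fun Y : Matrix (Fin D) (Fin D) ℂ => ∑ a, K a * Y * (K a)ᴴ)^[k] X
        = (X.trace / (D : ℂ)) • (1 : Matrix (Fin D) (Fin D) ℂ)) :
    (∑ a, K a * (K a)ᴴ = (1 : Matrix (Fin D) (Fin D) ℂ)) ∧
    (∑ a, (K a)ᴴ * K a = (1 : Matrix (Fin D) (Fin D) ℂ)) ∧
    (transferMatrix K).charpoly
      = Polynomial.X ^ (D ^ 2 - 1) * (Polynomial.X - 1) := by
  have : NeZero D := ⟨by omega⟩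
  set T := transferMatrix K
  set P := depolarizingMatrix (Fin D)
  have hTk : T ^ k = P := transferMatrix_pow_eq_depolarizingMatrix K hdep
  have hcomm : T * P = P ↔ P * T = P := by rw [← hTk, ← pow_succ, ← pow_succ']
  have hunital : ∑ a, K a * (K a)ᴴ = 1 ↔ T * P = P := by
    rw [mul_depolarizingMatrix_eq_self_iff, sum_mul_conjTranspose_eq_one_iff]
  have htp : ∑ a, (K a)ᴴ * K a = 1 ↔ P * T = P := by
    rw [depolarizingMatrix_mul_eq_self_iff, sum_conjTranspose_mul_eq_one_iff]
  have hTP : T * P = P := hut.elim hunital.mp (hcomm.mpr ∘ htp.mp)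
  refine ⟨hunital.mpr hTP, htp.mpr (hcomm.mp hTP), ?_⟩
  rw [charpoly_eq_of_pow_eq (by omega) hTk hTP (hcomm.mp hTP), charpoly_depolarizingMatrix,
    Fintype.card_fin]
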